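/- Repair of conjunctions of positive constraints: let C_1, …, C_n be finite directed multigraphs and for each i let P_i be a binary relation on directed multigraphs that is total (for every G there is H with P_i G H), increasing (P_i G H implies there exists an injective morphism G → H), and a repair relation for the positive constraint ∃C_i (P_i G H implies there exists an injective morphism C_i → H). Then the sequential composition P_1 ; … ; P_n is total, and whenever (P_1 ; … ; P_n) G H there exists an injective morphism C_i → H for every i = 1, …, n. -/

import Mathlib

/-- A directed multigraph: a set of nodes, a set of edges, and source/target maps. -/
structure DiMultigraph : Type 1 where
  V : Type
  E : Type
  s : E → V
  t : E → V

/-- A morphism of directed multigraphs: maps on nodes and edges compatible with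
sources and targets. -/
structure GraphHom (G H : DiMultigraph) : Type where
  fV : G.V → H.V
  fE : G.E → H.E
  src : ∀ e, H.s (fE e) = fV (G.s e)
  tgt : ∀ e, H.t (fE e) = fV (G.t e)

/-- Composition of graph morphisms. -/
def GraphHom.comp {G H K : DiMultigraph} (g : GraphHom H K) (f : GraphHom G H) :
    GraphHom G K where
  fV := g.fV ∘ f.fV
  fE := g.fE ∘ f.fE
  src e := by simp [g.src, f.src]
  tgt e := by simp [g.tgt, f.tgt]

/-- A graph morphism is injective if it is injective on nodes and on edges. -/
def GraphHom.Injective {G H : DiMultigraph} (f : GraphHom G H) : Prop :=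
  Function.Injective f.fV ∧ Function.Injective f.fE

/-- A graph is finite if its node set and edge set are finite. -/
def DiMultigraph.Finite (G : DiMultigraph) : Prop :=
  _root_.Finite G.V ∧ _root_.Finite G.E

/-- Sequential (relational) composition of a list of binary relations. -/
def SeqComp {X : Type*} : List (X → X → Prop) → (X → X → Prop)
  | [] => fun G H => G = H
  | P :: Ps => fun G H => ∃ M, P G M ∧ SeqComp Ps M H

/-!
Each `P i` only ever enlarges a graph by an injective morphism, so an embedding of `C i`
into the graph produced by step `i` survives all later steps: compose it with the injective
morphisms they provide.
-/

open Relation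

namespace SeqComp

variable {X : Type*}

theorem total {Ps : List (X → X → Prop)} (h : ∀ P ∈ Ps, ∀ G, ∃ H, P G H) (G : X) :
    ∃ H, SeqComp Ps G H := by
  induction Ps generalizing G with
  | nil => exact ⟨G, rfl⟩
  | cons P Ps ih =>
    obtain ⟨M, hM⟩ := h P List.mem_cons_self G
    obtain ⟨H, hH⟩ := ih (fun Q hQ => h Q (List.mem_cons_of_mem P hQ)) M
    exact ⟨H, M, hM, hH⟩

def Step (Ps : List (X → X → Prop)) (G H : X) : Prop :=
  ∃ P ∈ Ps, P G H

theorem Step.mono {Ps Qs : List (X → X → Prop)} (h : Ps ⊆ Qs) : Step Ps ≤ Step Qs :=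
  fun _ _ ⟨P, hP, hPGH⟩ => ⟨P, h hP, hPGH⟩

theorem reflTransGen_step {Ps : List (X → X → Prop)} {G H : X} (h : SeqComp Ps G H) :
    ReflTransGen (Step Ps) G H := by
  induction Ps generalizing G with
  | nil => exact h ▸ ReflTransGen.refl
  | cons P Ps ih =>
    obtain ⟨M, hM, hMH⟩ := h
    exact ReflTransGen.head ⟨P, List.mem_cons_self, hM⟩
      (ReflTransGen.mono (Step.mono (List.subset_cons_self P Ps)) _ _ (ih hMH))

theorem exists_step_of_mem {Ps : List (X → X → Prop)} {G H : X} (h : SeqComp Ps G H)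
    {P : X → X → Prop} (hP : P ∈ Ps) :
    ∃ A M, P A M ∧ ReflTransGen (Step Ps) M H := by
  induction Ps generalizing G with
  | nil => cases hP
  | cons Q Ps ih =>
    obtain ⟨M, hM, hMH⟩ := h
    have hmono := ReflTransGen.mono (Step.mono (List.subset_cons_self Q Ps))
    rcases List.mem_cons.1 hP with rfl | hP
    · exact ⟨G, M, hM, hmono _ _ (reflTransGen_step hMH)⟩
    · obtain ⟨A, N, hN, hNH⟩ := ih hMH hP
      exact ⟨A, N, hN, hmono _ _ hNH⟩

end SeqComp

def GraphHom.id (G : DiMultigraph) : GraphHom G G where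
  fV := _root_.id
  fE := _root_.id
  src _ := rfl
  tgt _ := rfl

theorem GraphHom.id_injective (G : DiMultigraph) : (GraphHom.id G).Injective :=
  ⟨Function.injective_id, Function.injective_id⟩

theorem GraphHom.Injective.comp {G H K : DiMultigraph} {g : GraphHom H K} {f : GraphHom G H}
    (hg : g.Injective) (hf : f.Injective) : (g.comp f).Injective :=
  ⟨hg.1.comp hf.1, hg.2.comp hf.2⟩

def DiMultigraph.Embeds (G H : DiMultigraph) : Prop :=
  ∃ m : GraphHom G H, m.Injective

namespace DiMultigraph.Embeds

theorem refl (G : DiMultigraph) : G.Embeds G :=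
  ⟨GraphHom.id G, GraphHom.id_injective G⟩

theorem trans {G H K : DiMultigraph} : G.Embeds H → H.Embeds K → G.Embeds K
  | ⟨f, hf⟩, ⟨g, hg⟩ => ⟨g.comp f, hg.comp hf⟩

theorem of_reflTransGen {r : DiMultigraph → DiMultigraph → Prop} (hr : ∀ G H, r G H → Embeds G H)
    {G H : DiMultigraph} (h : ReflTransGen r G H) : Embeds G H := by
  induction h with
  | refl => exact refl G
  | tail _ hstep ih => exact ih.trans (hr _ _ hstep)

end DiMultigraph.Embeds

theorem positive_conjunction_repair_general {n : ℕ} (C : Fin n → DiMultigraph)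
    (P : Fin n → DiMultigraph → DiMultigraph → Prop)
    (htotal : ∀ i, ∀ G, ∃ H, P i G H)
    (hinc : ∀ i, ∀ G H, P i G H → ∃ m : GraphHom G H, m.Injective)
    (hrepair : ∀ i, ∀ G H, P i G H → ∃ q : GraphHom (C i) H, q.Injective) :
    (∀ G, ∃ H, SeqComp (List.ofFn P) G H) ∧
    (∀ G H, SeqComp (List.ofFn P) G H →
      ∀ i, ∃ q : GraphHom (C i) H, q.Injective) := by
  refine ⟨SeqComp.total ?_, fun G H h i => ?_⟩
  · intro Q hQ
    obtain ⟨i, rfl⟩ := List.mem_ofFn.1 hQ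
    exact htotal i
  · have hstep : ∀ M N, SeqComp.Step (List.ofFn P) M N → M.Embeds N := by
      rintro M N ⟨Q, hQ, hMN⟩
      obtain ⟨j, rfl⟩ := List.mem_ofFn.1 hQ
      exact hinc j M N hMN
    obtain ⟨A, M, hAM, hMH⟩ := SeqComp.exists_step_of_mem h (List.mem_ofFn.2 ⟨i, rfl⟩)
    exact DiMultigraph.Embeds.trans (hrepair i A M hAM) (.of_reflTransGen hstep hMH)

/-- Repair of conjunctions of positive constraints: if each `P i` is total,
increasing, and a repair relation for the positive constraint `∃ C i`, then the
sequential composition `P 0 ; … ; P (n-1)` is total and every result `H` admits an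
injective morphism from every `C i`. -/
theorem positive_conjunction_repair {n : ℕ} (C : Fin n → DiMultigraph)
    (hC : ∀ i, (C i).Finite)
    (P : Fin n → DiMultigraph → DiMultigraph → Prop)
    (htotal : ∀ i, ∀ G, ∃ H, P i G H)
    (hinc : ∀ i, ∀ G H, P i G H → ∃ m : GraphHom G H, m.Injective)
    (hrepair : ∀ i, ∀ G H, P i G H → ∃ q : GraphHom (C i) H, q.Injective) :
    (∀ G, ∃ H, SeqComp (List.ofFn P) G H) ∧
    (∀ G H, SeqComp (List.ofFn P) G H →
      ∀ i, ∃ q : GraphHom (C i) H, q.Injective) :=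
  positive_conjunction_repair_general C P htotal hinc hrepair
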